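/- For every real N ≥ 2, ∑_{p ≤ N, p prime} (log p)/p < 2 + log N. -/

import Mathlib

/-!
Legendre's formula gives `∑_{p ≤ n} ⌊n/p⌋ log p ≤ log n! ≤ n log n`. Replacing `n/p` by the larger
`⌊n/p⌋ + 1` costs `θ(n) = ∑_{p ≤ n} log p`, which Chebyshev's bound keeps below `n log 4`.
Dividing by `n` gives `∑_{p ≤ n} log p / p ≤ log n + log 4`, and `log 4 < 2`.
-/

open Nat hiding log
open Finset Real Chebyshev

lemma Nat.div_le_factorization_factorial {p : ℕ} (hp : p.Prime) (n : ℕ) :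
    n / p ≤ (n !).factorization p := by
  rcases lt_or_ge n p with hnp | hpn
  · simp [Nat.div_eq_of_lt hnp]
  rw [factorization_factorial hp (lt_add_one (Nat.log p n))]
  have hone : 1 ∈ Ico 1 (Nat.log p n + 1) := by
    simpa using Nat.log_pos hp.one_lt hpn
  simpa using single_le_sum (f := fun i ↦ n / p ^ i) (fun _ _ ↦ Nat.zero_le _) hone

lemma Real.log_factorial_eq_sum_primesLE (n : ℕ) :
    log (n ! : ℕ) = ∑ p ∈ primesLE n, (n !).factorization p * log p := by
  rw [log_nat_eq_sum_factorization]
  refine Finsupp.sum_of_support_subset _ (fun p hp ↦ ?_) _ (by simp)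
  rw [Nat.support_factorization, Nat.mem_primeFactors] at hp
  exact mem_primesLE.2 ⟨hp.1.dvd_factorial.1 hp.2.1, hp.1⟩

lemma Real.sum_primesLE_div_mul_log_le_log_factorial (n : ℕ) :
    ∑ p ∈ primesLE n, ((n / p : ℕ) : ℝ) * log p ≤ log (n ! : ℕ) := by
  rw [log_factorial_eq_sum_primesLE]
  refine sum_le_sum fun p hp ↦ ?_
  have hlog : 0 ≤ log p := log_natCast_nonneg p
  gcongr
  exact_mod_cast div_le_factorization_factorial (mem_primesLE.1 hp).2 n

lemma Real.log_factorial_le_mul_log (n : ℕ) : log (n ! : ℕ) ≤ n * log n := by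
  rw [← log_pow]
  gcongr
  exact_mod_cast factorial_le_pow n

lemma Real.mul_log_div_le_div_add_one_mul_log (n p : ℕ) :
    n * (log p / p) ≤ ((n / p : ℕ) + 1) * log p := by
  have hlog : 0 ≤ log p := log_natCast_nonneg p
  have hdiv : (n : ℝ) / p ≤ (n / p : ℕ) + 1 := by
    rw [← floor_div_eq_div (K := ℝ)]
    exact (lt_floor_add_one _).le
  calc n * (log p / p) = n / p * log p := by ring
    _ ≤ _ := by gcongr

theorem Real.sum_primesLE_log_div_le {n : ℕ} (hn : n ≠ 0) :
    ∑ p ∈ primesLE n, log p / p ≤ log n + log 4 := by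
  have hn0 : (0 : ℝ) < n := by exact_mod_cast Nat.pos_of_ne_zero hn
  suffices n * ∑ p ∈ primesLE n, log p / p ≤ n * (log n + log 4) from
    le_of_mul_le_mul_left this hn0
  calc n * ∑ p ∈ primesLE n, log p / p
      ≤ ∑ p ∈ primesLE n, ((n / p : ℕ) + 1) * log p := by
        rw [mul_sum]
        exact sum_le_sum fun p _ ↦ mul_log_div_le_div_add_one_mul_log n p
    _ = ∑ p ∈ primesLE n, ((n / p : ℕ) : ℝ) * log p + θ n := by
        simp only [add_mul, one_mul, sum_add_distrib, theta_eq_sum_primesLE_log]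
    _ ≤ n * log n + log 4 * n := by
        gcongr
        · exact (sum_primesLE_div_mul_log_le_log_factorial n).trans (log_factorial_le_mul_log n)
        · exact theta_le_log4_mul_x hn0.le
    _ = n * (log n + log 4) := by ring

lemma Real.log_four_lt_two : log 4 < 2 := by
  rw [show (4 : ℝ) = 2 ^ 2 by norm_num, log_pow]
  have := log_two_lt_d9
  norm_num at this ⊢
  linarith

theorem stmt4 (N : ℝ) (hN : 2 ≤ N) :
    ∑ p ∈ (Finset.range (⌊N⌋₊ + 1)).filter Nat.Prime, Real.log p / p <
      2 + Real.log N := by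
  have hn : 0 < ⌊N⌋₊ := floor_pos.2 (by linarith)
  have hlog : log ⌊N⌋₊ ≤ log N :=
    log_le_log (by exact_mod_cast hn) (floor_le (by linarith))
  calc ∑ p ∈ primesLE ⌊N⌋₊, log p / p ≤ log ⌊N⌋₊ + log 4 := sum_primesLE_log_div_le hn.ne'
    _ < 2 + log N := by linarith [log_four_lt_two]
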